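/- Dual SDP form of Alberti's theorem for purified states: Let Y and Z be finite-dimensional complex vector spaces and let u, v ∈ Y⊗Z. Then F(Tr_Y(u u*), Tr_Y(v v*))² = inf{⟨Tr_Y(u u*), Z⟩ : Z a positive definite operator on Z with ⟨Tr_Y(v v*), Z⁻¹⟩ ≤ 1}, where F(P,Q) = Tr√(√P Q √P) is the fidelity and ⟨A,B⟩ = Tr(A*B). -/

import Mathlib

open Matrix
open scoped Kronecker ComplexOrder

noncomputable section

/-- The positive semidefinite square root of a positive semidefinite matrix
(the former Mathlib `Matrix.PosSemidef.sqrt`, removed since). -/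
def posSemidefSqrt {n : Type*} [Fintype n] [DecidableEq n] {A : Matrix n n ℂ}
    (hA : A.PosSemidef) : Matrix n n ℂ :=
  hA.1.eigenvectorUnitary.1 * diagonal ((↑) ∘ (√·) ∘ hA.1.eigenvalues) *
    (star hA.1.eigenvectorUnitary : Matrix n n ℂ)

/-- The trace norm `‖A‖₁ = Tr √(A* A)`. -/
def traceNorm {m n : Type*} [Fintype m] [Fintype n] [DecidableEq n]
    (A : Matrix m n ℂ) : ℝ :=
  (posSemidefSqrt (Matrix.posSemidef_conjTranspose_mul_self A)).trace.re

/-- The spectral norm (operator norm w.r.t. Euclidean norms). -/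
def specNorm {m n : Type*} [Fintype m] [Fintype n] [DecidableEq n]
    (A : Matrix m n ℂ) : ℝ :=
  ‖LinearMap.toContinuousLinearMap (Matrix.toEuclideanLin A)‖

/-- The Frobenius norm `‖A‖₂ = √Tr(A*A)`. -/
def frobeniusNorm {m n : Type*} [Fintype m] [Fintype n] (A : Matrix m n ℂ) : ℝ :=
  Real.sqrt ((Aᴴ * A).trace.re)

/-- Partial trace over the first tensor factor. -/
def ptraceFst {y z : Type*} [Fintype y] (M : Matrix (y × z) (y × z) ℂ) : Matrix z z ℂ :=
  Matrix.of fun a b => ∑ i, M (i, a) (i, b)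

/-- Partial trace over the second tensor factor. -/
def ptraceSnd {y z : Type*} [Fintype z] (M : Matrix (y × z) (y × z) ℂ) : Matrix y y ℂ :=
  Matrix.of fun i j => ∑ a, M (i, a) (j, a)

/-- The super-operator `Φ ⊗ 1_{L(W)}`, for `Φ : L(X) → L(Y)` and `W` indexed by `k`. -/
def tensorId {n m : Type*} [Fintype n] [Fintype m] (k : Type*) [Fintype k]
    (Φ : Matrix n n ℂ →ₗ[ℂ] Matrix m m ℂ) :
    Matrix (n × k) (n × k) ℂ →ₗ[ℂ] Matrix (m × k) (m × k) ℂ where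
  toFun M := Matrix.of fun p q => Φ (Matrix.of fun i j => M (i, p.2) (j, q.2)) p.1 q.1
  map_add' M N := by
    ext p q
    show Φ (Matrix.of fun i j => (M + N) (i, p.2) (j, q.2)) p.1 q.1 =
      Φ (Matrix.of fun i j => M (i, p.2) (j, q.2)) p.1 q.1 +
        Φ (Matrix.of fun i j => N (i, p.2) (j, q.2)) p.1 q.1
    have h : (Matrix.of fun i j => (M + N) (i, p.2) (j, q.2)) =
        (Matrix.of fun i j => M (i, p.2) (j, q.2)) +
          (Matrix.of fun i j => N (i, p.2) (j, q.2)) := rfl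
    rw [h, map_add]; rfl
  map_smul' c M := by
    ext p q
    show Φ (Matrix.of fun i j => (c • M) (i, p.2) (j, q.2)) p.1 q.1 =
      (c • Φ (Matrix.of fun i j => M (i, p.2) (j, q.2))) p.1 q.1
    have h : (Matrix.of fun i j => (c • M) (i, p.2) (j, q.2)) =
        c • (Matrix.of fun i j => M (i, p.2) (j, q.2)) := rfl
    rw [h, _root_.map_smul]

/-- The trace norm induced on super-operators. -/
def inducedTraceNorm {a b : Type*} [Fintype a] [DecidableEq a] [Fintype b] [DecidableEq b]
    (Φ : Matrix a a ℂ →ₗ[ℂ] Matrix b b ℂ) : ℝ :=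
  sSup {x : ℝ | ∃ X : Matrix a a ℂ, traceNorm X ≤ 1 ∧ x = traceNorm (Φ X)}

/-- The completely bounded trace norm (diamond norm):
`sup over k ≥ 1 of ‖Φ ⊗ 1_{L(ℂᵏ)}‖₁`. -/
def diamondNorm {n m : Type*} [Fintype n] [DecidableEq n] [Fintype m] [DecidableEq m]
    (Φ : Matrix n n ℂ →ₗ[ℂ] Matrix m m ℂ) : ℝ :=
  ⨆ k : ℕ, inducedTraceNorm (tensorId (Fin (k + 1)) Φ)


/-- Choi–Jamiołkowski representation `J(Φ) = Σ_{i,j} Φ(E_{i,j}) ⊗ E_{i,j}`. -/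
def choi {n m : Type*} [Fintype n] [DecidableEq n] [Fintype m]
    (Φ : Matrix n n ℂ →ₗ[ℂ] Matrix m m ℂ) : Matrix (m × n) (m × n) ℂ :=
  ∑ i : n, ∑ j : n, (Φ (Matrix.single i j 1)) ⊗ₖ (Matrix.single i j 1)

/-- A quantum channel: a completely positive and trace-preserving super-operator. -/
def IsQuantumChannel {n m : Type*} [Fintype n] [Fintype m]
    (Φ : Matrix n n ℂ →ₗ[ℂ] Matrix m m ℂ) : Prop :=
  (∀ (k : ℕ) (P : Matrix (n × Fin k) (n × Fin k) ℂ), P.PosSemidef →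
      (tensorId (Fin k) Φ P).PosSemidef) ∧
    ∀ X : Matrix n n ℂ, (Φ X).trace = X.trace

open Classical in
/-- Square root of a positive semidefinite matrix (junk value `0` otherwise). -/
def matSqrt {r : Type*} [Fintype r] [DecidableEq r] (P : Matrix r r ℂ) : Matrix r r ℂ :=
  if h : P.PosSemidef then posSemidefSqrt h else 0

/-- The fidelity `F(P,Q) = ‖√P √Q‖₁`. -/
def fidelity {r : Type*} [Fintype r] [DecidableEq r] (P Q : Matrix r r ℂ) : ℝ :=
  traceNorm (matSqrt P * matSqrt Q)

/-!
Weak duality is a Cauchy–Schwarz inequality: writing `√P √Q = (√P √Z) (√Z⁻¹ √Q)` and using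
`‖A B‖₁² ≤ Tr (A* A) Tr (B* B)` gives `F(P, Q)² ≤ ⟨P, Z⟩ ⟨Q, Z⁻¹⟩ ≤ ⟨P, Z⟩`. The trace-norm
inequality itself comes from the partial isometry `Y` of the polar decomposition of `X = A B`,
for which `Y* X = |X|`, followed by Cauchy–Schwarz for the Hilbert–Schmidt inner product.

For the reverse inequality regularise `Q` to `S = √Q + ε` and `√Q P √Q` to `M = S P S + ε`.
Then `Z = Tr √M • S (√M)⁻¹ S` is dual feasible with `⟨P, Z⟩ ≤ (Tr √M)²`, and operator
monotonicity of the square root gives `Tr √M ≤ Tr √(√Q P √Q) + O(√ε) = F(P, Q) + O(√ε)`.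
-/

namespace Matrix

open scoped MatrixOrder Matrix.Norms.L2Operator

variable {n : Type*} [Fintype n]

lemma re_trace_le_re_trace {A B : Matrix n n ℂ} (h : A ≤ B) : A.trace.re ≤ B.trace.re := by
  have := (Complex.le_def.mp (le_iff.mp h).trace_nonneg).1
  rwa [trace_sub, Complex.sub_re, Complex.zero_re, sub_nonneg] at this

lemma re_trace_nonneg {A : Matrix n n ℂ} (h : 0 ≤ A) : 0 ≤ A.trace.re := by
  simpa using re_trace_le_re_trace h

variable [DecidableEq n]

lemma sqrt_conjTranspose (A : Matrix n n ℂ) : (CFC.sqrt A)ᴴ = CFC.sqrt A :=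
  (CFC.sqrt_nonneg A).isSelfAdjoint

lemma re_trace_mul_le_re_trace_mul {A B R : Matrix n n ℂ} (h : A ≤ B) (hR : 0 ≤ R) :
    (A * R).trace.re ≤ (B * R).trace.re := by
  have key (X : Matrix n n ℂ) : (X * R).trace = (star (CFC.sqrt R) * X * CFC.sqrt R).trace := by
    rw [star_eq_conjTranspose, sqrt_conjTranspose, trace_mul_cycle, CFC.sqrt_mul_sqrt_self R,
      trace_mul_comm]
  rw [key, key]
  exact re_trace_le_re_trace (star_left_conjugate_le_conjugate h _)

lemma re_trace_mul_nonneg {A R : Matrix n n ℂ} (hA : 0 ≤ A) (hR : 0 ≤ R) :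
    0 ≤ (A * R).trace.re := by
  simpa using re_trace_mul_le_re_trace_mul hA hR

lemma norm_trace_conjTranspose_mul_sq_le (C B : Matrix n n ℂ) :
    ‖(Cᴴ * B).trace‖ ^ 2 ≤ (Cᴴ * C).trace.re * (Bᴴ * B).trace.re := by
  let := toMatrixSeminormedAddCommGroup (1 : Matrix n n ℂ) PosSemidef.one
  let := toMatrixInnerProductSpace (1 : Matrix n n ℂ) PosSemidef.one
  have hinner (X Y : Matrix n n ℂ) : inner ℂ Xᴴ Yᴴ = (Yᴴ * X).trace := by
    change (Yᴴ * 1 * Xᴴᴴ).trace = _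
    rw [mul_one, conjTranspose_conjTranspose]
  have hswap : (Bᴴ * C).trace = star (Cᴴ * B).trace := by
    rw [← trace_conjTranspose, conjTranspose_mul, conjTranspose_conjTranspose]
  have h := inner_mul_inner_self_le (𝕜 := ℂ) Bᴴ Cᴴ
  rwa [hinner, hinner, hinner, hinner, hswap, norm_star, ← sq, mul_comm] at h

/-- `Y = X |X|⁺`, where the pseudo-inverse `|X|⁺` is `cfc (·⁻¹) |X|` thanks to `0⁻¹ = 0`. -/
lemma exists_mul_conjTranspose_le_one_and_conjTranspose_mul_eq_sqrt (X : Matrix n n ℂ) :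
    ∃ Y : Matrix n n ℂ, Y * Yᴴ ≤ 1 ∧ Yᴴ * X = CFC.sqrt (Xᴴ * X) := by
  set T := CFC.sqrt (Xᴴ * X)
  have hX : 0 ≤ Xᴴ * X := (posSemidef_conjTranspose_mul_self X).nonneg
  have hcont (f : ℝ → ℝ) : ContinuousOn f (spectrum ℝ T) := T.finite_real_spectrum.continuousOn f
  set G := cfc (·⁻¹ : ℝ → ℝ) T
  have hG : Gᴴ = G := (cfc_predicate _ T : IsSelfAdjoint G)
  have hGT : G * T = cfc (fun x : ℝ => x⁻¹ * x) T := by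
    conv_lhs => rw [← cfc_id' ℝ T]
    exact (cfc_mul _ _ _ (hcont _) (hcont _)).symm
  have hGTT : G * T * T = T := by
    rw [hGT]
    conv_lhs => rhs; rw [← cfc_id' ℝ T]
    rw [← cfc_mul _ _ _ (hcont _) (hcont _)]
    conv_rhs => rw [← cfc_id' ℝ T]
    exact cfc_congr fun x _ => inv_mul_mul_self x
  have hTG : T * G = G * T := by
    simpa only [cfc_id' ℝ T] using (cfc_commute_cfc (fun x : ℝ => x) (·⁻¹) T).eq
  have hY : (X * G)ᴴ * (X * G) ≤ 1 := by
    rw [conjTranspose_mul, hG, mul_assoc, ← mul_assoc Xᴴ, ← CFC.sqrt_mul_sqrt_self _ hX,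
      ← mul_assoc, ← mul_assoc, hGTT, hTG, hGT]
    exact cfc_le_one _ _ fun x _ => inv_mul_le_one
  refine ⟨X * G, ?_, ?_⟩
  · rw [← star_eq_conjTranspose] at hY ⊢
    rw [← CStarAlgebra.norm_le_one_iff_of_nonneg _ (star_mul_self_nonneg _)] at hY
    rw [← CStarAlgebra.norm_le_one_iff_of_nonneg _ (mul_star_self_nonneg _)]
    rwa [CStarRing.norm_self_mul_star, ← CStarRing.norm_star_mul_self]
  · rw [conjTranspose_mul, hG, mul_assoc, ← CFC.sqrt_mul_sqrt_self _ hX, ← mul_assoc, hGTT]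

lemma trace_conjTranspose_mul_self_sqrt_mul_sqrt {A B : Matrix n n ℂ} (hA : 0 ≤ A) (hB : 0 ≤ B) :
    ((CFC.sqrt A * CFC.sqrt B)ᴴ * (CFC.sqrt A * CFC.sqrt B)).trace = (A * B).trace := by
  rw [conjTranspose_mul, sqrt_conjTranspose, sqrt_conjTranspose, mul_assoc,
    ← mul_assoc (CFC.sqrt A), CFC.sqrt_mul_sqrt_self A, trace_mul_comm, mul_assoc,
    CFC.sqrt_mul_sqrt_self B]

lemma re_trace_sqrt_le_of_le_add_smul_one {K M : Matrix n n ℂ} (hK : 0 ≤ K) {η : ℝ} (hη : 0 ≤ η)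
    (hM : M ≤ K + η • 1) :
    (CFC.sqrt M).trace.re ≤ (CFC.sqrt K).trace.re + Fintype.card n * √η := by
  have hle : K + η • 1 ≤ (CFC.sqrt K + √η • 1) ^ 2 := by
    have hexp : (CFC.sqrt K + √η • 1) ^ 2 = K + η • 1 + (2 * √η) • CFC.sqrt K := by
      rw [sq, add_mul, mul_add, mul_add, CFC.sqrt_mul_sqrt_self K, smul_mul_smul_comm,
        Real.mul_self_sqrt hη, one_mul, smul_mul_assoc, mul_smul_comm, one_mul, mul_one]
      module
    rw [hexp]
    exact le_add_of_nonneg_right (smul_nonneg (by positivity) (CFC.sqrt_nonneg K))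
  have hsqrt : CFC.sqrt M ≤ CFC.sqrt K + √η • 1 :=
    calc CFC.sqrt M ≤ CFC.sqrt ((CFC.sqrt K + √η • 1) ^ 2) := CFC.sqrt_le_sqrt _ _ (hM.trans hle)
      _ = CFC.sqrt K + √η • 1 :=
        CFC.sqrt_sq _ (add_nonneg (CFC.sqrt_nonneg K) (smul_nonneg (by positivity) zero_le_one))
  refine (re_trace_le_re_trace hsqrt).trans_eq ?_
  simp [mul_comm]

lemma le_sqrt_add_smul_one_mul_self {Q : Matrix n n ℂ} (hQ : 0 ≤ Q) {ε : ℝ} (hε : 0 ≤ ε) :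
    Q ≤ (CFC.sqrt Q + ε • 1) * (CFC.sqrt Q + ε • 1) := by
  have hexp : (CFC.sqrt Q + ε • 1) * (CFC.sqrt Q + ε • 1) =
      Q + ((2 * ε) • CFC.sqrt Q + (ε * ε) • 1) := by
    rw [add_mul, mul_add, mul_add, CFC.sqrt_mul_sqrt_self Q, smul_mul_smul_comm, one_mul,
      smul_mul_assoc, mul_smul_comm, one_mul, mul_one]
    module
  rw [hexp]
  exact le_add_of_nonneg_right (add_nonneg (smul_nonneg (by positivity) (CFC.sqrt_nonneg Q))
    (smul_nonneg (by positivity) zero_le_one))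

lemma sqrt_add_smul_one_mul_mul_add_smul_one_le {P : Matrix n n ℂ} (hP : 0 ≤ P)
    (Q : Matrix n n ℂ) {ε : ℝ} (hε : 0 ≤ ε) (hε1 : ε ≤ 1) :
    (CFC.sqrt Q + ε • 1) * P * (CFC.sqrt Q + ε • 1) + ε • 1 ≤
      CFC.sqrt Q * P * CFC.sqrt Q + (ε * ‖CFC.sqrt Q * P + P * CFC.sqrt Q + P + 1‖) • 1 := by
  set H := CFC.sqrt Q * P + P * CFC.sqrt Q + P + 1
  have hH : IsSelfAdjoint H := by
    have hPQ : IsSelfAdjoint (CFC.sqrt Q * P + P * CFC.sqrt Q) := by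
      simp [IsSelfAdjoint, star_mul, (CFC.sqrt_nonneg Q).isSelfAdjoint.star_eq,
        hP.isSelfAdjoint.star_eq, add_comm]
    exact (hPQ.add hP.isSelfAdjoint).add (.one _)
  have hexp : (CFC.sqrt Q + ε • 1) * P * (CFC.sqrt Q + ε • 1) + ε • 1 =
      CFC.sqrt Q * P * CFC.sqrt Q + ε • (H - (1 - ε) • P) := by
    simp only [H, add_mul, mul_add, smul_mul_assoc, mul_smul_comm, one_mul, mul_one]
    module
  rw [hexp, mul_smul, add_le_add_iff_left]
  refine smul_le_smul_of_nonneg_left ?_ hε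
  calc H - (1 - ε) • P ≤ H := sub_le_self _ (smul_nonneg (by linarith) hP)
    _ ≤ ‖H‖ • 1 := by simpa [Algebra.algebraMap_eq_smul_one] using hH.le_algebraMap_norm_self

/-- For invertible `S = √Q` and `M = S P S` the witness `Tr √M • S (√M)⁻¹ S` is
`F(P, Q) • (P⁻¹ # Q)` (`#` the matrix geometric mean), the optimal dual solution. -/
lemma exists_posDef_re_trace_mul_le_sq {P Q S M : Matrix n n ℂ} (hS : S.PosDef)
    (hQS : Q ≤ S * S) (hM : M.PosDef) (hSPS : S * P * S ≤ M) :
    ∃ Z : Matrix n n ℂ, Z.PosDef ∧ (Q * Z⁻¹).trace.re ≤ 1 ∧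
      (P * Z).trace.re ≤ (CFC.sqrt M).trace.re ^ 2 := by
  rcases isEmpty_or_nonempty n with hn | hn
  · exact ⟨1, PosDef.one, by simp [trace], by simp [trace]⟩
  set R := CFC.sqrt M
  have hR : R.PosDef := isStrictlyPositive_iff_posDef.mp hM.isStrictlyPositive.sqrt
  set f := R.trace.re
  have hf : 0 < f := by simpa using hR.trace_pos.1
  have hSu : IsUnit S.det := (isUnit_iff_isUnit_det S).mp hS.isUnit
  have hRu : IsUnit R.det := (isUnit_iff_isUnit_det R).mp hR.isUnit
  have hZinv : (f • (S * R⁻¹ * S))⁻¹ = f⁻¹ • (S⁻¹ * R * S⁻¹) := by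
    refine inv_eq_left_inv ?_
    rw [smul_mul_smul_comm, inv_mul_cancel₀ hf.ne', one_smul]
    simp only [mul_assoc]
    rw [nonsing_inv_mul_cancel_left (h := hSu), mul_nonsing_inv_cancel_left (h := hRu),
      nonsing_inv_mul _ hSu]
  refine ⟨f • (S * R⁻¹ * S), ?_, ?_, ?_⟩
  · refine PosDef.smul ?_ hf
    have := (IsUnit.posDef_star_left_conjugate_iff hS.isUnit).mpr hR.inv
    rwa [star_eq_conjTranspose, hS.1.eq] at this
  · have hQ1 : S⁻¹ * Q * S⁻¹ ≤ 1 := by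
      have := star_left_conjugate_le_conjugate hQS S⁻¹
      rwa [star_eq_conjTranspose, hS.inv.1.eq, ← mul_assoc, nonsing_inv_mul _ hSu, one_mul,
        mul_nonsing_inv _ hSu] at this
    have hle := re_trace_mul_le_re_trace_mul hQ1 hR.posSemidef.nonneg
    rw [one_mul] at hle
    rw [hZinv, mul_smul_comm, trace_smul, Complex.smul_re, smul_eq_mul, ← mul_assoc,
      trace_mul_comm, ← mul_assoc, ← mul_assoc]
    exact inv_mul_le_one_of_le₀ hle hf.le
  · have hle := re_trace_mul_le_re_trace_mul hSPS hR.inv.posSemidef.nonneg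
    rw [← CFC.sqrt_mul_sqrt_self M hM.posSemidef.nonneg,
      mul_nonsing_inv_cancel_right _ _ hRu] at hle
    rw [mul_smul_comm, trace_smul, Complex.smul_re, smul_eq_mul, ← mul_assoc,
      trace_mul_comm, ← mul_assoc, ← mul_assoc, sq]
    exact mul_le_mul_of_nonneg_left hle hf.le

end Matrix

section Fidelity

open Filter Topology
open scoped MatrixOrder Matrix.Norms.L2Operator

variable {n : Type*} [Fintype n] [DecidableEq n]

lemma posSemidefSqrt_eq_sqrt {A : Matrix n n ℂ} (hA : A.PosSemidef) :
    posSemidefSqrt hA = CFC.sqrt A := by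
  rw [CFC.sqrt_eq_cfc, cfc_nnreal_eq_real _ A hA.nonneg, hA.1.cfc_eq]
  simp only [IsHermitian.cfc, Unitary.conjStarAlgAut_apply, posSemidefSqrt]
  congr 3
  ext i
  simp [Real.coe_sqrt, Real.coe_toNNReal', hA.eigenvalues_nonneg i]

lemma traceNorm_eq_re_trace_sqrt (X : Matrix n n ℂ) :
    traceNorm X = (CFC.sqrt (Xᴴ * X)).trace.re := by
  rw [traceNorm, posSemidefSqrt_eq_sqrt]

lemma fidelity_eq_traceNorm {P Q : Matrix n n ℂ} (hP : 0 ≤ P) (hQ : 0 ≤ Q) :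
    fidelity P Q = traceNorm (CFC.sqrt P * CFC.sqrt Q) := by
  rw [fidelity, matSqrt, matSqrt, dif_pos hP.posSemidef, dif_pos hQ.posSemidef,
    posSemidefSqrt_eq_sqrt, posSemidefSqrt_eq_sqrt]

lemma traceNorm_sqrt_mul_sqrt {P : Matrix n n ℂ} (hP : 0 ≤ P) (Q : Matrix n n ℂ) :
    traceNorm (CFC.sqrt P * CFC.sqrt Q) = (CFC.sqrt (CFC.sqrt Q * P * CFC.sqrt Q)).trace.re := by
  rw [traceNorm_eq_re_trace_sqrt, conjTranspose_mul, Matrix.sqrt_conjTranspose,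
    Matrix.sqrt_conjTranspose, mul_assoc, ← mul_assoc (CFC.sqrt P), CFC.sqrt_mul_sqrt_self P,
    ← mul_assoc]

lemma traceNorm_mul_sq_le (A B : Matrix n n ℂ) :
    traceNorm (A * B) ^ 2 ≤ (Aᴴ * A).trace.re * (Bᴴ * B).trace.re := by
  obtain ⟨Y, hY, hYX⟩ := exists_mul_conjTranspose_le_one_and_conjTranspose_mul_eq_sqrt (A * B)
  have htrace : traceNorm (A * B) ≤ ‖((Aᴴ * Y)ᴴ * B).trace‖ := by
    rw [traceNorm_eq_re_trace_sqrt, ← hYX, conjTranspose_mul, conjTranspose_conjTranspose,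
      mul_assoc]
    exact Complex.re_le_norm _
  have hAY : ((Aᴴ * Y)ᴴ * (Aᴴ * Y)).trace.re ≤ (Aᴴ * A).trace.re := by
    have h := re_trace_le_re_trace (star_left_conjugate_le_conjugate hY A)
    rw [mul_one, star_eq_conjTranspose, ← mul_assoc] at h
    rwa [conjTranspose_mul, conjTranspose_conjTranspose, trace_mul_comm, ← mul_assoc]
  calc traceNorm (A * B) ^ 2 ≤ ‖((Aᴴ * Y)ᴴ * B).trace‖ ^ 2 := by
        gcongr
        rw [traceNorm_eq_re_trace_sqrt]
        exact re_trace_nonneg (CFC.sqrt_nonneg _)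
    _ ≤ ((Aᴴ * Y)ᴴ * (Aᴴ * Y)).trace.re * (Bᴴ * B).trace.re :=
        norm_trace_conjTranspose_mul_sq_le _ _
    _ ≤ (Aᴴ * A).trace.re * (Bᴴ * B).trace.re := by
        gcongr
        exact re_trace_nonneg (posSemidef_conjTranspose_mul_self B).nonneg

lemma traceNorm_sqrt_mul_sqrt_sq_le {P Q Z : Matrix n n ℂ} (hP : 0 ≤ P) (hQ : 0 ≤ Q)
    (hZ : Z.PosDef) :
    traceNorm (CFC.sqrt P * CFC.sqrt Q) ^ 2 ≤ (P * Z).trace.re * (Q * Z⁻¹).trace.re := by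
  have hZ' := hZ.isStrictlyPositive
  have hfactor : CFC.sqrt P * CFC.sqrt Q =
      (CFC.sqrt P * CFC.sqrt Z) * (CFC.sqrt Z⁻¹ * CFC.sqrt Q) := by
    rw [← hZ.posSemidef.inv_sqrt, mul_assoc, ← mul_assoc (CFC.sqrt Z),
      mul_nonsing_inv _ ((isUnit_iff_isUnit_det _).mp hZ'.sqrt.isUnit), one_mul]
  rw [hfactor]
  refine (traceNorm_mul_sq_le _ _).trans_eq ?_
  rw [trace_conjTranspose_mul_self_sqrt_mul_sqrt hP hZ'.nonneg,
    trace_conjTranspose_mul_self_sqrt_mul_sqrt hZ.inv.posSemidef.nonneg hQ, trace_mul_comm Z⁻¹]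

lemma exists_dual_feasible_le {P Q : Matrix n n ℂ} (hP : 0 ≤ P) (hQ : 0 ≤ Q) :
    ∃ c : ℝ, ∀ ε : ℝ, 0 < ε → ε ≤ 1 → ∃ Z : Matrix n n ℂ, Z.PosDef ∧
      (Q * Z⁻¹).trace.re ≤ 1 ∧
      (P * Z).trace.re ≤ (traceNorm (CFC.sqrt P * CFC.sqrt Q) + Fintype.card n * √(ε * c)) ^ 2 := by
  refine ⟨‖CFC.sqrt Q * P + P * CFC.sqrt Q + P + 1‖, fun ε hε hε1 => ?_⟩
  set S := CFC.sqrt Q + ε • (1 : Matrix n n ℂ)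
  have hεI : IsStrictlyPositive (ε • (1 : Matrix n n ℂ)) := isStrictlyPositive_one.smul hε
  have hS : S.PosDef := isStrictlyPositive_iff_posDef.mp (hεI.nonneg_add (CFC.sqrt_nonneg Q))
  have hSPS : 0 ≤ S * P * S := by
    have := star_left_conjugate_nonneg hP S
    rwa [star_eq_conjTranspose, hS.1.eq] at this
  have hM : (S * P * S + ε • 1).PosDef :=
    isStrictlyPositive_iff_posDef.mp (hεI.nonneg_add hSPS)
  obtain ⟨Z, hZ, hfeas, hval⟩ := exists_posDef_re_trace_mul_le_sq hS
    (le_sqrt_add_smul_one_mul_self hQ hε.le) hM (le_add_of_nonneg_right hεI.nonneg)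
  refine ⟨Z, hZ, hfeas, hval.trans ?_⟩
  have hK : 0 ≤ CFC.sqrt Q * P * CFC.sqrt Q := by
    have := star_left_conjugate_nonneg hP (CFC.sqrt Q)
    rwa [star_eq_conjTranspose, sqrt_conjTranspose] at this
  have hM_le := re_trace_sqrt_le_of_le_add_smul_one hK (by positivity)
    (sqrt_add_smul_one_mul_mul_add_smul_one_le hP Q hε.le hε1)
  rw [traceNorm_sqrt_mul_sqrt hP]
  gcongr
  exact re_trace_nonneg (CFC.sqrt_nonneg _)

lemma exists_dual_feasible_lt {P Q : Matrix n n ℂ} (hP : 0 ≤ P) (hQ : 0 ≤ Q) {w : ℝ}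
    (hw : traceNorm (CFC.sqrt P * CFC.sqrt Q) ^ 2 < w) :
    ∃ Z : Matrix n n ℂ, Z.PosDef ∧ (Q * Z⁻¹).trace.re ≤ 1 ∧ (P * Z).trace.re < w := by
  obtain ⟨c, hc⟩ := exists_dual_feasible_le hP hQ
  set F := traceNorm (CFC.sqrt P * CFC.sqrt Q)
  have hlim : Tendsto (fun ε : ℝ => (F + Fintype.card n * √(ε * c)) ^ 2) (𝓝[>] 0) (𝓝 (F ^ 2)) := by
    have hcont : Continuous fun ε : ℝ => (F + Fintype.card n * √(ε * c)) ^ 2 := by fun_prop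
    simpa using (hcont.tendsto 0).mono_left nhdsWithin_le_nhds
  obtain ⟨ε, hεw, hε0, hε1⟩ :=
    ((hlim.eventually (gt_mem_nhds hw)).and (Ioc_mem_nhdsGT zero_lt_one)).exists
  obtain ⟨Z, hZ, hfeas, hval⟩ := hc ε hε0 hε1
  exact ⟨Z, hZ, hfeas, hval.trans_lt hεw⟩

lemma posSemidef_ptraceFst_vecMulVec_self_star {y z : Type*} [Fintype y] [Fintype z]
    (u : y × z → ℂ) : (ptraceFst (vecMulVec u (star u))).PosSemidef := by
  have : ptraceFst (vecMulVec u (star u)) =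
      (of fun i a => star (u (i, a)))ᴴ * of fun i a => star (u (i, a)) := by
    ext a b
    simp [ptraceFst, mul_apply, vecMulVec_apply]
  rw [this]
  exact posSemidef_conjTranspose_mul_self _

end Fidelity

/-- Dual SDP form of Alberti's theorem for purified states. -/
theorem alberti_dual_sdp {m r : ℕ} (u v : Fin m × Fin r → ℂ) :
    sInf {x : ℝ | ∃ Z : Matrix (Fin r) (Fin r) ℂ, Z.PosDef ∧
        ((ptraceFst (vecMulVec v (star v)))ᴴ * Z⁻¹).trace.re ≤ 1 ∧
        x = ((ptraceFst (vecMulVec u (star u)))ᴴ * Z).trace.re} =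
      fidelity (ptraceFst (vecMulVec u (star u)))
        (ptraceFst (vecMulVec v (star v))) ^ 2 := by
  have hP := posSemidef_ptraceFst_vecMulVec_self_star u
  have hQ := posSemidef_ptraceFst_vecMulVec_self_star v
  rw [hP.1.eq, hQ.1.eq, fidelity_eq_traceNorm hP.nonneg hQ.nonneg]
  refine csInf_eq_of_forall_ge_of_forall_gt_exists_lt ?_ ?_ fun w hw => ?_
  · obtain ⟨Z, hZ, hfeas, -⟩ := exists_dual_feasible_lt hP.nonneg hQ.nonneg (lt_add_one _)
    exact ⟨_, Z, hZ, hfeas, rfl⟩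
  · rintro _ ⟨Z, hZ, hfeas, rfl⟩
    exact (traceNorm_sqrt_mul_sqrt_sq_le hP.nonneg hQ.nonneg hZ).trans
      (mul_le_of_le_one_right (re_trace_mul_nonneg hP.nonneg hZ.posSemidef.nonneg) hfeas)
  · obtain ⟨Z, hZ, hfeas, hlt⟩ := exists_dual_feasible_lt hP.nonneg hQ.nonneg hw
    exact ⟨_, ⟨Z, hZ, hfeas, rfl⟩, hlt⟩

end
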